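/- arXiv:2307.12547 — 3 statements merged into one kernel-verified Lean document; each statement's English description precedes it below -/
import Mathlib

section
/- Let (X=[n], (θ_i), (p_i), b, q) be a knapsack instance with nonnegative integer data. Construct G with V = {u_0} ∪ {u_i, v_i, w_i : i ∈ [n]}, E = {{u_{i-1}, v_i}, {u_{i-1}, w_i}, {u_i, v_i}, {u_i, w_i} : i ∈ [n]}, weights w(v_i)=θ_i, α(v_i)=p_i, and w(u_i)=α(u_i)=w(w_i)=α(w_i)=0. Then there exists I ⊆ [n] with Σ_{i∈I} θ_i ≤ b and Σ_{i∈I} p_i ≥ q if and only if there exists a path P from u_0 to u_n in G whose vertex set U satisfies Σ_{u∈U} w(u) ≤ b and Σ_{u∈U} α(u) ≥ q. -/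
/-!
A set `I` of items corresponds to the path `u_0 - x_1 - u_1 - ⋯ - x_n - u_n` that passes through
`x_i = v_i` for `i ∈ I` and through the weightless `x_i = w_i` otherwise; conversely only the
vertices `v_i` carry weight or value, so any walk from `u_0` to `u_n` has the weight and value of
the item set `{i | v_i lies on it}`.
-/

open SimpleGraph

/-- Vertices of the gadget graph: `u_0, ..., u_n`, `v_1, ..., v_n`, `w_1, ..., w_n`. -/
abbrev GadV (n : ℕ) : Type := Fin (n + 1) ⊕ Fin n ⊕ Fin n

/-- The gadget graph: `v_i` and `w_i` are adjacent exactly to `u_{i-1}` and `u_i`. -/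
def GadG (n : ℕ) : SimpleGraph (GadV n) :=
  SimpleGraph.fromRel (fun x y =>
    match x, y with
    | .inl j, .inr (.inl i) => j = i.castSucc ∨ j = i.succ
    | .inl j, .inr (.inr i) => j = i.castSucc ∨ j = i.succ
    | _, _ => False)

/-- Weights: `w(v_i) = θ_i`, all other vertices have weight `0`. -/
def gadW (n : ℕ) (θ : Fin n → ℕ) : GadV n → ℕ
  | .inr (.inl i) => θ i
  | _ => 0

/-- Values: `α(v_i) = p_i`, all other vertices have value `0`. -/
def gadA (n : ℕ) (pv : Fin n → ℕ) : GadV n → ℕ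
  | .inr (.inl i) => pv i
  | _ => 0

open Finset

lemma gadA_eq_gadW (n : ℕ) : gadA n = gadW n := by
  funext g u
  rcases u with j | i | i <;> rfl

lemma sum_gadW_eq_sum_preimage (n : ℕ) (g : Fin n → ℕ) (S : Finset (GadV n)) :
    ∑ u ∈ S, gadW n g u =
      ∑ i ∈ S.preimage (Sum.inr ∘ Sum.inl) (Sum.inr_injective.comp Sum.inl_injective).injOn,
        g i := by
  refine (sum_preimage _ S _ (gadW n g) ?_).symm
  rintro (j | i | i) _ hi
  · rfl
  · exact absurd ⟨i, rfl⟩ hi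
  · rfl

namespace GadG

variable {n : ℕ} (I : Finset (Fin n))

def midVertex (i : Fin n) : GadV n :=
  if i ∈ I then .inr (.inl i) else .inr (.inr i)

lemma adj_midVertex_left (i : Fin n) : (GadG n).Adj (.inl i.castSucc) (midVertex I i) := by
  unfold midVertex
  split <;> simp [GadG]

lemma adj_midVertex_right (i : Fin n) : (GadG n).Adj (midVertex I i) (.inl i.succ) := by
  unfold midVertex
  split <;> simp [GadG]

def level : GadV n → ℕ
  | .inl j => 2 * j
  | .inr (.inl i) => 2 * i + 1
  | .inr (.inr i) => 2 * i + 1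

lemma level_midVertex (i : Fin n) : level (midVertex I i) = 2 * i + 1 := by
  unfold midVertex
  split <;> rfl

def selectWalk : (k : Fin (n + 1)) → (GadG n).Walk (.inl 0) (.inl k) :=
  Fin.induction Walk.nil fun i p =>
    (p.concat (adj_midVertex_left I i)).concat (adj_midVertex_right I i)

lemma support_selectWalk_zero : (selectWalk I 0).support = [.inl 0] := rfl

lemma support_selectWalk_succ (i : Fin n) :
    (selectWalk I i.succ).support =
      (selectWalk I i.castSucc).support ++ [midVertex I i, .inl i.succ] := by
  simp [selectWalk, Fin.induction_succ]

lemma map_level_support_selectWalk (k : Fin (n + 1)) :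
    (selectWalk I k).support.map level = List.range (2 * k + 1) := by
  induction k using Fin.induction with
  | zero => rfl
  | succ i ih =>
    rw [support_selectWalk_succ, List.map_append, ih, List.map_cons, List.map_cons, List.map_nil,
      level_midVertex]
    simp [level, List.range_succ, mul_add]

lemma isPath_selectWalk (k : Fin (n + 1)) : (selectWalk I k).IsPath := by
  rw [Walk.isPath_def]
  apply List.Nodup.of_map level
  rw [map_level_support_selectWalk]
  exact List.nodup_range

lemma inr_inl_mem_support_selectWalk (k : Fin (n + 1)) (i : Fin n) :
    .inr (.inl i) ∈ (selectWalk I k).support ↔ i ∈ I ∧ i.castSucc < k := by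
  induction k using Fin.induction with
  | zero => simp [support_selectWalk_zero]
  | succ j ih =>
    rw [support_selectWalk_succ, List.mem_append, ih, Fin.castSucc_lt_castSucc_iff,
      Fin.castSucc_lt_succ_iff, le_iff_lt_or_eq]
    unfold midVertex
    split <;> simp <;> grind

lemma sum_gadW_support_selectWalk (g : Fin n → ℕ) :
    ∑ u ∈ (selectWalk I (Fin.last n)).support.toFinset, gadW n g u = ∑ i ∈ I, g i := by
  rw [sum_gadW_eq_sum_preimage]
  congr 1
  ext i
  simp [inr_inl_mem_support_selectWalk, Fin.castSucc_lt_last]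

end GadG

open GadG in
/-- Knapsack is equivalent to Path Knapsack on the gadget graph: there is `I ⊆ [n]`
with `Σ θ_i ≤ b`, `Σ p_i ≥ q` iff there is a `u_0`–`u_n` path of total vertex
weight at most `b` and total value at least `q`. -/
theorem stmt7 (n : ℕ) (θ pv : Fin n → ℕ) (b q : ℕ) :
    (∃ I : Finset (Fin n), ∑ i ∈ I, θ i ≤ b ∧ ∑ i ∈ I, pv i ≥ q) ↔
    (∃ p : (GadG n).Walk (Sum.inl 0) (Sum.inl (Fin.last n)), p.IsPath ∧
      ∑ u ∈ p.support.toFinset, gadW n θ u ≤ b ∧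
      ∑ u ∈ p.support.toFinset, gadA n pv u ≥ q) := by
  rw [gadA_eq_gadW]
  constructor
  · rintro ⟨I, hθ, hpv⟩
    refine ⟨selectWalk I (Fin.last n), isPath_selectWalk I _, ?_, ?_⟩
    · rwa [sum_gadW_support_selectWalk]
    · rwa [sum_gadW_support_selectWalk]
  · rintro ⟨p, -, hθ, hpv⟩
    rw [sum_gadW_eq_sum_preimage] at hθ hpv
    exact ⟨_, hθ, hpv⟩
end

section
/- Let G=(V,E) be a graph with nonnegative vertex weights w and values α, let s be a knapsack capacity, let ε > 0, and let α_max = max_{u∈V} α(u). Define scaled values α'(u) = ⌊ n·α(u) / (ε·α_max) ⌋. Suppose W' ⊆ V maximizes Σ_{u∈W'} α'(u) among all connected vertex subsets of weight at most s, and W ⊆ V maximizes Σ_{u∈W} α(u) among all connected vertex subsets of weight at most s. Then Σ_{u∈W'} α(u) ≥ (1-ε)·Σ_{u∈W} α(u), provided α_max ≤ Σ_{u∈W} α(u). -/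
open Finset

/-! Rounding `α` down to multiples of `c = ε α_max / n` loses less than `c` per vertex, so
comparing the rounded values of the two optima costs at most `n c = ε α_max ≤ ε α(W)`. -/

theorem Finset.sum_le_sum_add_card_mul_of_sum_floor_div_le {ι k : Type*} [Field k] [LinearOrder k]
    [IsOrderedRing k] [FloorRing k] {c : k} (hc : 0 < c) (f : ι → k) {A B : Finset ι}
    (h : ∑ u ∈ A, ⌊f u / c⌋ ≤ ∑ u ∈ B, ⌊f u / c⌋) :
    ∑ u ∈ A, f u ≤ ∑ u ∈ B, f u + #A * c :=
  calc ∑ u ∈ A, f u ≤ ∑ u ∈ A, ((⌊f u / c⌋ : k) * c + c) :=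
        sum_le_sum fun u _ => by linarith [Int.sub_floor_div_mul_lt (f u) hc]
    _ = ((∑ u ∈ A, ⌊f u / c⌋ : ℤ) : k) * c + #A * c := by
        rw [sum_add_distrib, ← sum_mul, sum_const, nsmul_eq_mul]; push_cast; rfl
    _ ≤ ((∑ u ∈ B, ⌊f u / c⌋ : ℤ) : k) * c + #A * c := by gcongr
    _ ≤ ∑ u ∈ B, f u + #A * c := by
        push_cast
        rw [sum_mul]
        gcongr with u
        linarith [Int.sub_floor_div_mul_nonneg (f u) hc]

theorem stmt12_general {V : Type*} [Fintype V] [Nonempty V]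
    (α : V → ℝ) (hα : ∀ u, 0 ≤ α u)
    (ε : ℝ) (hε : 0 < ε)
    (αmax : ℝ) (hαmax : αmax = univ.sup' univ_nonempty α)
    (α' : V → ℤ)
    (hα' : ∀ u, α' u = ⌊(Fintype.card V : ℝ) * α u / (ε * αmax)⌋)
    (Feasible : Finset V → Prop)
    (W' W : Finset V)
    (hW'opt : Feasible W' ∧ ∀ U, Feasible U → ∑ u ∈ U, α' u ≤ ∑ u ∈ W', α' u)
    (hWopt : Feasible W ∧ ∀ U, Feasible U → ∑ u ∈ U, α u ≤ ∑ u ∈ W, α u)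
    (hOPT : αmax ≤ ∑ u ∈ W, α u) :
    (1 - ε) * ∑ u ∈ W, α u ≤ ∑ u ∈ W', α u := by
  have hle_max : ∀ u, α u ≤ αmax := fun u => hαmax ▸ le_sup' α (mem_univ u)
  rcases ((hα (Classical.arbitrary V)).trans (hle_max _)).eq_or_lt with hzero | hpos
  · have hα_zero : ∀ u, α u = 0 := fun u => le_antisymm (hzero ▸ hle_max u) (hα u)
    simp [hα_zero]
  set n : ℕ := Fintype.card V
  have hn : (n : ℝ) ≠ 0 := Nat.cast_ne_zero.mpr Fintype.card_ne_zero
  have hc : 0 < ε * αmax / n := by positivity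
  have hα'_eq : ∀ u, α' u = ⌊α u / (ε * αmax / n)⌋ := fun u => by
    rw [hα', div_div_eq_mul_div, mul_comm]
  have hround := sum_le_sum_add_card_mul_of_sum_floor_div_le hc α
    (by simpa only [hα'_eq] using hW'opt.2 W hWopt.1)
  have hcard : (#W : ℝ) * (ε * αmax / n) ≤ ε * αmax :=
    calc (#W : ℝ) * (ε * αmax / n) ≤ n * (ε * αmax / n) := by
          gcongr; exact_mod_cast card_le_univ W
      _ = ε * αmax := mul_div_cancel₀ _ hn
  linarith [mul_le_mul_of_nonneg_left hOPT hε.le]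

/-- Correctness of the scaling-and-rounding FPTAS for Connected Knapsack: if `W'` is an
optimal connected solution for the scaled values `α'(u) = ⌊n α(u) / (ε α_max)⌋` and `W`
is an optimal connected solution for the original values `α`, and `α_max ≤ α(W)`, then
`α(W') ≥ (1 - ε) α(W)`. -/
theorem stmt12 {V : Type*} [Fintype V] [Nonempty V] (G : SimpleGraph V)
    (w α : V → ℝ) (hw : ∀ u, 0 ≤ w u) (hα : ∀ u, 0 ≤ α u)
    (s : ℝ) (ε : ℝ) (hε : 0 < ε)
    (αmax : ℝ) (hαmax : αmax = univ.sup' univ_nonempty α)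
    (α' : V → ℤ)
    (hα' : ∀ u, α' u = ⌊(Fintype.card V : ℝ) * α u / (ε * αmax)⌋)
    (Feasible : Finset V → Prop)
    (hFeas : ∀ U : Finset V, Feasible U ↔
      (G.induce (↑U : Set V)).Connected ∧ ∑ u ∈ U, w u ≤ s)
    (W' W : Finset V)
    (hW'opt : Feasible W' ∧ ∀ U, Feasible U → ∑ u ∈ U, α' u ≤ ∑ u ∈ W', α' u)
    (hWopt : Feasible W ∧ ∀ U, Feasible U → ∑ u ∈ U, α u ≤ ∑ u ∈ W, α u)
    (hOPT : αmax ≤ ∑ u ∈ W, α u) :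
    (1 - ε) * ∑ u ∈ W, α u ≤ ∑ u ∈ W', α u :=
  stmt12_general α hα ε hε αmax hαmax α' hα' Feasible W' W hW'opt hWopt hOPT
end

section
/- Let G be an edge-weighted graph with positive edge weights, a source x, and vertex weights w and values α. For a vertex v, call a pair (w(P), α(P)) of a shortest x–v path P undominated if no other shortest x–v path Q satisfies w(Q) ≤ w(P) and α(Q) ≥ α(P) with at least one inequality strict. If P* = (x, ..., z, v) is an undominated shortest x–v path, then its prefix Q = (x, ..., z) is an undominated shortest x–z path. -/
open SimpleGraph

variable {V : Type*}

/-- The cost of a walk: the sum of its edge weights. -/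
def walkCost {G : SimpleGraph V} (c : Sym2 V → ℝ) {a b : V} (p : G.Walk a b) : ℝ :=
  (p.edges.map c).sum

/-- `p` is a shortest `a`–`b` path: it is a path of minimum cost among all `a`–`b` paths. -/
def IsShortestPath {G : SimpleGraph V} (c : Sym2 V → ℝ) {a b : V} (p : G.Walk a b) : Prop :=
  p.IsPath ∧ ∀ q : G.Walk a b, q.IsPath → walkCost c p ≤ walkCost c q

/-- A shortest path `p` is undominated if no shortest path `q` (between the same
endpoints) has `w(q) ≤ w(p)` and `α(q) ≥ α(p)` with `(w(q), α(q)) ≠ (w(p), α(p))`. -/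
def IsUndominated {G : SimpleGraph V} (c : Sym2 V → ℝ) (w α : V → ℝ) {a b : V}
    (p : G.Walk a b) : Prop :=
  IsShortestPath c p ∧
    ¬ ∃ q : G.Walk a b, IsShortestPath c q ∧
        (q.support.map w).sum ≤ (p.support.map w).sum ∧
        (p.support.map α).sum ≤ (q.support.map α).sum ∧
        ((q.support.map w).sum, (q.support.map α).sum) ≠
          ((p.support.map w).sum, (p.support.map α).sum)

lemma walkCost_append {G : SimpleGraph V} (c : Sym2 V → ℝ) {a b d : V}
    (p : G.Walk a b) (q : G.Walk b d) :
    walkCost c (p.append q) = walkCost c p + walkCost c q := by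
  simp [walkCost, SimpleGraph.Walk.edges_append]

lemma walkCost_concat {G : SimpleGraph V} (c : Sym2 V → ℝ) {a b d : V}
    (p : G.Walk a b) (h : G.Adj b d) :
    walkCost c (p.concat h) = walkCost c p + c s(b, d) := by
  simp [SimpleGraph.Walk.concat_eq_append, walkCost_append, walkCost]

lemma walkCost_nonneg {G : SimpleGraph V} {c : Sym2 V → ℝ}
    (hc : ∀ e ∈ G.edgeSet, 0 < c e) {a b : V} (p : G.Walk a b) :
    0 ≤ walkCost c p := by
  apply List.sum_nonneg
  intro r hr
  obtain ⟨e, he, rfl⟩ := List.mem_map.mp hr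
  exact le_of_lt (hc e (p.edges_subset_edgeSet he))

lemma concat_isPath {G : SimpleGraph V} {a b d : V} {p : G.Walk a b} {h : G.Adj b d}
    (hp : p.IsPath) (hd : d ∉ p.support) : (p.concat h).IsPath := by
  rw [← SimpleGraph.Walk.isPath_reverse_iff, SimpleGraph.Walk.reverse_concat,
    SimpleGraph.Walk.cons_isPath_iff]
  refine ⟨hp.reverse, ?_⟩
  simpa using hd

lemma mem_of_concat_not_path {G : SimpleGraph V} {a b d : V} {p : G.Walk a b} {h : G.Adj b d}
    (hp : p.IsPath) (hnp : ¬ (p.concat h).IsPath) : d ∈ p.support := by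
  by_contra hd
  exact hnp (concat_isPath hp hd)

/-- If `P* = (x, ..., z, v)` is an undominated shortest `x`–`v` path, then its prefix
`Q = (x, ..., z)` is an undominated shortest `x`–`z` path. (Edge weights are positive.) -/
theorem stmt16 (G : SimpleGraph V) (c : Sym2 V → ℝ)
    (hc : ∀ e ∈ G.edgeSet, 0 < c e) (w α : V → ℝ)
    (x z v : V) (Q : G.Walk x z) (h : G.Adj z v)
    (hP : IsUndominated c w α (Q.concat h)) :
    IsUndominated c w α Q := by
  classical
  obtain ⟨⟨hPpath, hPmin⟩, hPund⟩ := hP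
  have hce : 0 < c s(z, v) := hc _ (G.mem_edgeSet.mpr h)
  have hQpath : Q.IsPath := by
    rw [SimpleGraph.Walk.concat_eq_append] at hPpath
    exact hPpath.of_append_left
  -- key: any path q from x to z containing v has strictly larger cost than Q,
  -- and otherwise cost q ≥ cost Q.
  have key : ∀ q : G.Walk x z, q.IsPath →
      (walkCost c Q ≤ walkCost c q) ∧ (v ∈ q.support → walkCost c Q < walkCost c q) := by
    intro q hq
    by_cases hv : v ∈ q.support
    · have q1 := q.takeUntil v hv
      have hq1 : (q.takeUntil v hv).IsPath := hq.takeUntil hv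
      have h1 : walkCost c (Q.concat h) ≤ walkCost c (q.takeUntil v hv) :=
        hPmin _ hq1
      have hsplit : walkCost c q =
          walkCost c (q.takeUntil v hv) + walkCost c (q.dropUntil v hv) := by
        conv_lhs => rw [← q.take_spec hv]
        exact walkCost_append c _ _
      have h2 : 0 ≤ walkCost c (q.dropUntil v hv) := walkCost_nonneg hc _
      rw [walkCost_concat] at h1
      constructor
      · linarith
      · intro _; linarith
    · have hqc : (q.concat h).IsPath := concat_isPath hq hv
      have := hPmin _ hqc
      rw [walkCost_concat, walkCost_concat] at this
      exact ⟨by linarith, fun hv' => absurd hv' hv⟩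
  refine ⟨⟨hQpath, fun q hq => (key q hq).1⟩, ?_⟩
  rintro ⟨q, ⟨hqpath, hqmin⟩, hw, ha, hne⟩
  have hQcost : walkCost c q = walkCost c Q :=
    le_antisymm (hqmin Q hQpath) ((key q hqpath).1)
  have hv : v ∉ q.support := by
    intro hv
    have := (key q hqpath).2 hv
    linarith
  have hqc : (q.concat h).IsPath := concat_isPath hqpath hv
  apply hPund
  refine ⟨q.concat h, ⟨hqc, ?_⟩, ?_, ?_, ?_⟩
  · intro r hr
    have := hPmin r hr
    rw [walkCost_concat] at this
    rw [walkCost_concat, hQcost]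
    linarith
  · simp only [SimpleGraph.Walk.support_concat, List.concat_eq_append, List.map_append,
      List.sum_append, List.map_cons, List.map_nil, List.sum_cons, List.sum_nil]
    linarith
  · simp only [SimpleGraph.Walk.support_concat, List.concat_eq_append, List.map_append,
      List.sum_append, List.map_cons, List.map_nil, List.sum_cons, List.sum_nil]
    linarith
  · simp only [SimpleGraph.Walk.support_concat, List.concat_eq_append, List.map_append,
      List.sum_append, List.map_cons, List.map_nil, List.sum_cons, List.sum_nil,
      Prod.mk.injEq, not_and_or]
    intro hEq
    rw [Prod.mk.injEq] at hEq
    exact hne (by rw [Prod.mk.injEq]; constructor <;> linarith [hEq.1, hEq.2])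
end
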